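/- arXiv:1705.05932 — 2 statements merged into one kernel-verified Lean document; each statement's English description precedes it below -/
import Mathlib

section
/- For fixed reals x, y > 0 with x ≠ y, the Dirichlet free-fermion kernel K^D(u,v) = (1/π) ∑_{k=1}^{N} sin(ku/2) sin(kv/2) satisfies lim_{N→∞} (2π/N) K^D(2πx/N, 2πy/N) = sin(π(x-y))/(π(x-y)) - sin(π(x+y))/(π(x+y)). -/
/-!
By `2 sin a sin b = cos (a - b) - cos (a + b)`, the rescaled kernel is the difference of the
Riemann sums `N⁻¹ ∑_{k ≤ N} cos (k c / N)` of `∫₀¹ cos (c t) dt = sinc c` at `c = π (x ∓ y)`.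
The Dirichlet summation formula gives these sums in closed form, with denominator
`N sin (c / 2N) → c / 2`, so they converge to `sin (c/2) cos (c/2) / (c/2) = sinc c`.
-/

open Real Finset Filter

noncomputable def dirichletKernel (N : ℕ) (u v : ℝ) : ℝ :=
  (1 / π) * ∑ k ∈ Icc 1 N, sin (k * u / 2) * sin (k * v / 2)

noncomputable def cosRiemannSum (c : ℝ) (N : ℕ) : ℝ :=
  (N : ℝ)⁻¹ * ∑ k ∈ Icc 1 N, cos (k * c / N)

theorem Real.mul_sinc (x : ℝ) : x * sinc x = sin x := by
  rcases eq_or_ne x 0 with rfl | hx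
  · simp
  · rw [sinc_of_ne_zero hx, mul_div_cancel₀ _ hx]

theorem Real.sin_half_mul_sum_Icc_cos (N : ℕ) (a : ℝ) :
    sin (a / 2) * ∑ k ∈ Icc 1 N, cos (k * a) = sin (N * a / 2) * cos ((N + 1) * a / 2) := by
  rw [← Ico_add_one_right_eq_Icc, ← sum_Ico_add' (fun k : ℕ => cos (k * a)) 0 N 1,
    ← range_eq_Ico]
  convert sin_mul_sum_cos N a a using 3 <;> push_cast <;> ring_nf

theorem tendsto_natCast_mul_sin_div (c : ℝ) :
    Tendsto (fun N : ℕ => N * sin (c / N)) atTop (nhds c) := by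
  have hsinc : Tendsto (fun N : ℕ => sinc (c / N)) atTop (nhds 1) :=
    sinc_zero ▸ (continuous_sinc.tendsto 0).comp (tendsto_const_div_atTop_nhds_zero_nat c)
  refine (mul_one c ▸ hsinc.const_mul c).congr' ?_
  filter_upwards [eventually_ne_atTop 0] with N hN
  rw [← mul_sinc, ← mul_assoc, mul_div_cancel₀ _ (Nat.cast_ne_zero.mpr hN)]

theorem cosRiemannSum_mul_natCast_mul_sin (c : ℝ) {N : ℕ} (hN : N ≠ 0) :
    cosRiemannSum c N * (N * sin (c / 2 / N)) = sin (c / 2) * cos ((c + c / N) / 2) := by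
  have hN' : (N : ℝ) ≠ 0 := Nat.cast_ne_zero.mpr hN
  calc cosRiemannSum c N * (N * sin (c / 2 / N))
      = sin (c / N / 2) * ∑ k ∈ Icc 1 N, cos (k * (c / N)) := by
        simp only [cosRiemannSum, div_right_comm c 2, ← mul_div_assoc]
        generalize ∑ k ∈ Icc 1 N, cos (k * c / N) = S
        field_simp
    _ = sin (c / 2) * cos ((c + c / N) / 2) := by
        rw [sin_half_mul_sum_Icc_cos, mul_div_cancel₀ _ hN', add_one_mul, mul_div_cancel₀ _ hN']

theorem tendsto_cosRiemannSum (c : ℝ) :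
    Tendsto (cosRiemannSum c) atTop (nhds (sinc c)) := by
  rcases eq_or_ne c 0 with rfl | hc
  · refine tendsto_const_nhds.congr' ?_
    filter_upwards [eventually_ne_atTop 0] with N hN
    simp [cosRiemannSum, hN]
  have hden := tendsto_natCast_mul_sin_div (c / 2)
  have hnum : Tendsto (fun N : ℕ => sin (c / 2) * cos ((c + c / N) / 2)) atTop
      (nhds (sin (c / 2) * cos ((c + 0) / 2))) :=
    ((continuous_cos.tendsto _).comp
      (((tendsto_const_div_atTop_nhds_zero_nat c).const_add c).div_const 2)).const_mul _
  have hc2 : c / 2 ≠ 0 := div_ne_zero hc two_ne_zero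
  have hlim : sin (c / 2) * cos ((c + 0) / 2) / (c / 2) = sinc c := by
    have hsin : sin c = 2 * sin (c / 2) * cos (c / 2) := by
      rw [← sin_two_mul, mul_div_cancel₀ c two_ne_zero]
    rw [sinc_of_ne_zero hc, add_zero, hsin]
    field_simp
  refine hlim ▸ (hnum.div hden hc2).congr' ?_
  filter_upwards [eventually_ne_atTop 0, hden.eventually_ne hc2] with N hN hsin
  rw [Pi.div_apply, eq_comm, eq_div_iff hsin, cosRiemannSum_mul_natCast_mul_sin c hN]

theorem two_pi_div_mul_dirichletKernel (x y : ℝ) (N : ℕ) :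
    2 * π / N * dirichletKernel N (2 * π * x / N) (2 * π * y / N)
      = cosRiemannSum (π * (x - y)) N - cosRiemannSum (π * (x + y)) N := by
  have hsum : ∀ k : ℕ, sin (k * (2 * π * x / N) / 2) * sin (k * (2 * π * y / N) / 2)
      = (cos (k * (π * (x - y)) / N) - cos (k * (π * (x + y)) / N)) / 2 := fun k => by
    rw [eq_div_iff two_ne_zero, mul_comm, ← mul_assoc, two_mul_sin_mul_sin]
    ring_nf
  simp only [dirichletKernel, cosRiemannSum, hsum, ← sum_div, sum_sub_distrib]
  generalize ∑ k ∈ Icc 1 N, cos (k * (π * (x - y)) / N) = A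
  generalize ∑ k ∈ Icc 1 N, cos (k * (π * (x + y)) / N) = B
  field_simp [pi_ne_zero]

theorem dirichlet_edge_scaling_to_bessel (x y : ℝ) (hx : 0 < x) (hy : 0 < y)
    (hxy : x ≠ y) :
    Tendsto
      (fun N : ℕ => (2 * Real.pi / N) *
        ((1 / Real.pi) * ∑ k ∈ Finset.Icc 1 N,
          Real.sin (k * (2 * Real.pi * x / N) / 2) *
            Real.sin (k * (2 * Real.pi * y / N) / 2)))
      atTop
      (nhds (Real.sin (Real.pi * (x - y)) / (Real.pi * (x - y)) -
        Real.sin (Real.pi * (x + y)) / (Real.pi * (x + y)))) := by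
  have hc : π * (x - y) ≠ 0 := mul_ne_zero pi_ne_zero (sub_ne_zero.mpr hxy)
  have hd : π * (x + y) ≠ 0 := mul_ne_zero pi_ne_zero (by positivity)
  rw [← sinc_of_ne_zero hc, ← sinc_of_ne_zero hd]
  exact ((tendsto_cosRiemannSum _).sub (tendsto_cosRiemannSum _)).congr fun N =>
    (two_pi_div_mul_dirichletKernel x y N).symm
end

section
/- Fix N ∈ ℕ and set μ(T) = T·log((2N+1)/√(πT)). Then for each fixed real x, the finite temperature CUE kernel K_{CUE(T,μ)}(x,x) = (1/(2π)) ∑_{k∈ℤ} 1/(1 + e^{-(μ(T) - k²)/T}) converges to (2N+1)/(2π) as T → ∞. -/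
/-!
The fugacity is `z = e^{μ/T} = (2N+1)/√(πT)`, and the Fermi factor at energy `k²` is `x/(1+x)`
for the Boltzmann weight `x = z e^{-k²/T} ≤ z`. Since `x - x² ≤ x/(1+x) ≤ x` and `z → 0`, the
Fermi sum is asymptotic to the Boltzmann sum `z ∑ₖ e^{-k²/T}`, which by Poisson summation equals
`z √(πT) ∑ₖ e^{-π²T k²} = (2N+1) ∑ₖ e^{-π²T k²} → 2N+1`.
-/

open Real Filter Topology

lemma summable_exp_neg_mul_int_sq {a : ℝ} (ha : 0 < a) :
    Summable fun k : ℤ => exp (-a * (k : ℝ) ^ 2) := by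
  refine (summable_pow_mul_jacobiTheta₂_term_bound 0 (div_pos ha pi_pos) 0).congr fun k => ?_
  rw [pow_zero, one_mul, mul_zero, zero_mul, sub_zero]
  congr 1
  field_simp

lemma tendsto_tsum_exp_neg_mul_int_sq_atTop :
    Tendsto (fun a : ℝ => ∑' k : ℤ, exp (-a * (k : ℝ) ^ 2)) atTop (𝓝 1) := by
  have hlim : ∀ k : ℤ, Tendsto (fun a : ℝ => exp (-a * (k : ℝ) ^ 2)) atTop
      (𝓝 (if k = 0 then 1 else 0)) := by
    intro k
    rcases eq_or_ne k 0 with rfl | hk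
    · simp
    · have hk2 : 0 < (k : ℝ) ^ 2 := by positivity
      rw [if_neg hk]
      refine tendsto_exp_atBot.comp ?_
      simp_rw [neg_mul]
      exact tendsto_neg_atTop_atBot.comp (tendsto_id.atTop_mul_const hk2)
  have hbound : ∀ᶠ a in atTop, ∀ k : ℤ, ‖exp (-a * (k : ℝ) ^ 2)‖ ≤ exp (-1 * (k : ℝ) ^ 2) := by
    filter_upwards [eventually_ge_atTop 1] with a ha k
    rw [norm_of_nonneg (exp_pos _).le, exp_le_exp]
    nlinarith [sq_nonneg (k : ℝ)]
  simpa using tendsto_tsum_of_dominated_convergence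
    (summable_exp_neg_mul_int_sq one_pos) hlim hbound

lemma tsum_exp_neg_inv_mul_int_sq {T : ℝ} (hT : 0 < T) :
    ∑' k : ℤ, exp (-T⁻¹ * (k : ℝ) ^ 2) =
      √(π * T) * ∑' k : ℤ, exp (-(π ^ 2 * T) * (k : ℝ) ^ 2) := by
  have hπT : 0 < π * T := by positivity
  have h := Real.tsum_exp_neg_mul_int_sq (inv_pos.mpr hπT)
  rw [one_div, Real.inv_rpow hπT.le, inv_inv, ← Real.sqrt_eq_rpow] at h
  convert h using 3 <;> field_simp

lemma tendsto_tsum_exp_neg_inv_mul_int_sq_div_sqrt :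
    Tendsto (fun T : ℝ => (∑' k : ℤ, exp (-T⁻¹ * (k : ℝ) ^ 2)) / √(π * T)) atTop (𝓝 1) := by
  refine (tendsto_tsum_exp_neg_mul_int_sq_atTop.comp
    (tendsto_id.const_mul_atTop (by positivity : 0 < π ^ 2))).congr' ?_
  filter_upwards [eventually_gt_atTop 0] with T hT
  have : 0 < √(π * T) := by positivity
  rw [tsum_exp_neg_inv_mul_int_sq hT, mul_div_cancel_left₀ _ this.ne']
  rfl

lemma sub_sq_le_div_one_add {x : ℝ} (hx : 0 ≤ x) : x - x ^ 2 ≤ x / (1 + x) := by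
  rw [le_div_iff₀ (by positivity)]
  nlinarith [pow_nonneg hx 3]

lemma tsum_div_one_add_bounds {ι : Type*} {g : ι → ℝ} {z : ℝ} (hg : Summable g)
    (hg0 : ∀ i, 0 ≤ g i) (hgz : ∀ i, g i ≤ z) :
    (1 - z) * ∑' i, g i ≤ ∑' i, g i / (1 + g i) ∧ ∑' i, g i / (1 + g i) ≤ ∑' i, g i := by
  have hle : ∀ i, g i / (1 + g i) ≤ g i := fun i => div_le_self (hg0 i) (by linarith [hg0 i])
  have hsum : Summable fun i => g i / (1 + g i) :=
    hg.of_nonneg_of_le (fun i => by have := hg0 i; positivity) hle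
  refine ⟨?_, hsum.tsum_le_tsum hle hg⟩
  rw [← tsum_mul_left]
  refine (hg.mul_left _).tsum_le_tsum (fun i => ?_) hsum
  calc (1 - z) * g i ≤ g i - g i ^ 2 := by nlinarith [hg0 i, hgz i]
    _ ≤ g i / (1 + g i) := sub_sq_le_div_one_add (hg0 i)

lemma tendsto_tsum_div_one_add {ι α : Type*} {l : Filter α} {g : α → ι → ℝ} {z : α → ℝ}
    {L : ℝ} (hg : ∀ᶠ t in l, Summable (g t)) (hg0 : ∀ᶠ t in l, ∀ i, 0 ≤ g t i)
    (hgz : ∀ᶠ t in l, ∀ i, g t i ≤ z t) (hz : Tendsto z l (𝓝 0))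
    (hL : Tendsto (fun t => ∑' i, g t i) l (𝓝 L)) :
    Tendsto (fun t => ∑' i, g t i / (1 + g t i)) l (𝓝 L) := by
  have hlower : Tendsto (fun t => (1 - z t) * ∑' i, g t i) l (𝓝 L) := by
    simpa using (tendsto_const_nhds (x := (1 : ℝ))).sub hz |>.mul hL
  have hbounds := (hg.and (hg0.and hgz)).mono fun _ ⟨h1, h2, h3⟩ =>
    tsum_div_one_add_bounds h1 h2 h3
  exact tendsto_of_tendsto_of_tendsto_of_le_of_le' hlower hL
    (hbounds.mono fun _ h => h.1) (hbounds.mono fun _ h => h.2)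

/-- With `μ = T log z`, the Fermi factor at energy `E` is `x / (1 + x)` for the Boltzmann weight
`x = z e^{-E/T}`. -/
lemma one_div_one_add_exp_neg_sub_div_eq {T z E : ℝ} (hT : T ≠ 0) (hz : 0 < z) :
    1 / (1 + exp (-(T * log z - E) / T)) = z * exp (-T⁻¹ * E) / (1 + z * exp (-T⁻¹ * E)) := by
  have hexp : exp (-(T * log z - E) / T) = (z * exp (-T⁻¹ * E))⁻¹ := by
    rw [← exp_log hz, ← exp_add, ← exp_neg, log_exp]
    congr 1
    field_simp
    ring
  have : 0 < z * exp (-T⁻¹ * E) := by positivity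
  rw [hexp]
  field_simp
  ring

theorem finite_temperature_cue_diagonal_high_T (N : ℕ) :
    Tendsto
      (fun T : ℝ => (1 / (2 * Real.pi)) * ∑' k : ℤ,
        1 / (1 + Real.exp (-(T * Real.log ((2 * N + 1) / Real.sqrt (Real.pi * T)) -
          (k : ℝ) ^ 2) / T)))
      atTop (𝓝 ((2 * N + 1) / (2 * Real.pi))) := by
  set z : ℝ → ℝ := fun T => (2 * N + 1) / √(π * T)
  set g : ℝ → ℤ → ℝ := fun T k => z T * exp (-T⁻¹ * (k : ℝ) ^ 2)
  have hz : Tendsto z atTop (𝓝 0) :=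
    tendsto_const_nhds.div_atTop (tendsto_sqrt_atTop.comp (tendsto_id.const_mul_atTop pi_pos))
  have hsum : Tendsto (fun T => ∑' k, g T k) atTop (𝓝 (2 * N + 1)) := by
    simp_rw [g, tsum_mul_left, z, mul_comm_div]
    simpa using tendsto_tsum_exp_neg_inv_mul_int_sq_div_sqrt.const_mul (2 * (N : ℝ) + 1)
  have hfermi : Tendsto (fun T => ∑' k, g T k / (1 + g T k)) atTop (𝓝 (2 * N + 1)) := by
    refine tendsto_tsum_div_one_add ?_ ?_ ?_ hz hsum <;>
      filter_upwards [eventually_gt_atTop 0] with T hT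
    · exact (summable_exp_neg_mul_int_sq (inv_pos.mpr hT)).mul_left _
    · intro k
      positivity
    · intro k
      refine mul_le_of_le_one_right (by positivity) (exp_le_one_iff.mpr ?_)
      exact mul_nonpos_of_nonpos_of_nonneg (neg_nonpos.mpr (inv_pos.mpr hT).le) (sq_nonneg _)
  rw [show (2 * N + 1) / (2 * π) = 1 / (2 * π) * (2 * N + 1) by ring]
  refine (hfermi.const_mul _).congr' ?_
  filter_upwards [eventually_gt_atTop 0] with T hT
  congr 1
  exact tsum_congr fun k => (one_div_one_add_exp_neg_sub_div_eq hT.ne' (by positivity)).symm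
end
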